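/- Theorem 2(ii) (Correctness of deferred update). For the Priority-Based Aggregation process, define q*_{i,t} recursively for t ∈ T^0 and i ∈ K̂_t by q*_{i,t} = min{q*_{i,τ_t}, W_{i,t}/z*_t}, except that q*_{i,t} = min{1, W_{i,t}/z*_t} when k_t = i. Then q_{i,t} = q*_{i,t} for all t and i for which both are defined; i.e., the exact retention probabilities computed against the per-time thresholds z_s coincide with those computed lazily against the running maximum threshold z*_t only at arrival times of each key. -/

import Mathlib

/-!
Priority-Based Aggregation (PBA), Theorem 1 (unbiasedness).

The PBA process is modelled deterministically as a function of the stream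
`(keys t, xs t)` (items arrive at times `t = 1, 2, …`) and of the family
`u t` of uniform variates, where `u t` is the fresh uniform random variable
generated at time `t` in case the arriving key is not in the current sample.

The state records the sample keyset `sample` (capacity `m`), the cumulative
weights `W k` since the last admission of `k`, the uniform variate `uu k`
attached to `k` at its admission, the retention probabilities `q k`
(eq. (6) of the paper), the lazily computed probabilities `qstar k`
(eq. (8)), the unbiased estimates `est k` (eq. (7)), the current threshold
`z` (the minimum priority at a discard step, `0` otherwise), the running
maximal threshold `zstar`, the discarded key of the current step, and a flag
`newkey` recording whether the current time lies in `T⁰`.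
-/

open MeasureTheory

structure PBAState (K : Type*) where
  sample : Finset K
  W : K → ℝ
  uu : K → ℝ
  q : K → ℝ
  qstar : K → ℝ
  est : K → ℝ
  z : ℝ
  zstar : ℝ
  discard : Option K
  newkey : Bool

/-- The key of minimal priority, ties broken by the order on `K`. -/
noncomputable def argminKey {K : Type*} [LinearOrder K] (s : Finset K) (f : K → ℝ)
    (h : s.Nonempty) : K :=
  (s.filter fun k => f k = s.inf' h f).min' (by
    obtain ⟨k, hk, hfk⟩ := Finset.exists_mem_eq_inf' h f
    exact ⟨k, Finset.mem_filter.mpr ⟨hk, hfk.symm⟩⟩)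

/-- One step of PBA: process the arriving item `(k, x)`, with `ut` the fresh
uniform variate available at this time. -/
noncomputable def pbaStep {K : Type*} [LinearOrder K] (m : ℕ) (k : K) (x : ℝ) (ut : ℝ)
    (st : PBAState K) : PBAState K :=
  if k ∈ st.sample then
    -- aggregate to an existing key
    { st with
      W := Function.update st.W k (st.W k + x)
      est := Function.update st.est k (st.est k + x)
      z := 0
      discard := none
      newkey := false }
  else
    -- provisional admission of the new key
    let W' := Function.update st.W k x
    let uu' := Function.update st.uu k ut
    let q' := Function.update st.q k 1
    let qstar' := Function.update st.qstar k 1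
    let est' := Function.update st.est k x
    let s' := insert k st.sample
    have hs' : s'.Nonempty := Finset.insert_nonempty k st.sample
    if s'.card ≤ m then
      { sample := s', W := W', uu := uu', q := q', qstar := qstar', est := est',
        z := 0, zstar := st.zstar, discard := none, newkey := true }
    else
      -- discard the key of minimal priority and renormalize the estimates
      let prio : K → ℝ := fun k' => W' k' / uu' k'
      let zt : ℝ := s'.inf' hs' prio
      let kstar : K := argminKey s' prio hs'
      let zs : ℝ := max st.zstar zt
      let survivors : Finset K := s'.erase kstar
      let qnew : K → ℝ := fun k' => min (q' k') (W' k' / zt)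
      let qstarnew : K → ℝ := fun k' =>
        if k' = k then min 1 (W' k' / zs) else min (qstar' k') (W' k' / zs)
      { sample := survivors
        W := W'
        uu := uu'
        q := fun k' => if k' ∈ survivors then qnew k' else q' k'
        qstar := fun k' => if k' ∈ survivors then qstarnew k' else qstar' k'
        est := fun k' => if k' ∈ survivors then est' k' * q' k' / qnew k' else 0
        z := zt
        zstar := zs
        discard := some kstar
        newkey := true }

/-- The initial (empty) state. -/
def pbaInit (K : Type*) : PBAState K :=
  { sample := ∅, W := fun _ => 0, uu := fun _ => 1, q := fun _ => 1,
    qstar := fun _ => 1, est := fun _ => 0, z := 0, zstar := 0,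
    discard := none, newkey := false }

/-- The PBA trajectory: the state after processing items `1, …, t`. -/
noncomputable def pbaTraj {K : Type*} [LinearOrder K] (m : ℕ) (keys : ℕ → K) (xs : ℕ → ℝ)
    (u : ℕ → ℝ) : ℕ → PBAState K
  | 0 => pbaInit K
  | t + 1 => pbaStep m (keys (t + 1)) (xs (t + 1)) (u (t + 1)) (pbaTraj m keys xs u t)

/-- The true aggregate `X_{k,t} = ∑_{s ≤ t, k_s = k} x_s`. -/
noncomputable def trueAgg {K : Type*} [DecidableEq K] (keys : ℕ → K) (xs : ℕ → ℝ)
    (k : K) (t : ℕ) : ℝ :=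
  ∑ s ∈ Finset.Icc 1 t, if keys s = k then xs s else 0


lemma argminKey_spec {K : Type*} [LinearOrder K] (s : Finset K) (f : K → ℝ)
    (h : s.Nonempty) :
    argminKey s f h ∈ s ∧ f (argminKey s f h) = s.inf' h f := by
  have hne : (s.filter fun k => f k = s.inf' h f).Nonempty := by
    obtain ⟨k, hk, hfk⟩ := Finset.exists_mem_eq_inf' h f
    exact ⟨k, Finset.mem_filter.mpr ⟨hk, hfk.symm⟩⟩
  have hmem : argminKey s f h ∈ s.filter fun k => f k = s.inf' h f :=
    Finset.min'_mem _ hne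
  rw [Finset.mem_filter] at hmem
  exact hmem

lemma argminKey_eq_of_unique {K : Type*} [LinearOrder K] (s : Finset K) (f : K → ℝ)
    (h : s.Nonempty) (k : K) (hk : k ∈ s)
    (huniq : ∀ j ∈ s, j ≠ k → f k < f j) :
    argminKey s f h = k := by
  obtain ⟨hmem, hval⟩ := argminKey_spec s f h
  by_contra hne
  have h1 : f k < f (argminKey s f h) := huniq _ hmem hne
  have h2 : s.inf' h f ≤ f k := Finset.inf'_le f hk
  rw [hval] at h1
  linarith

/-- The inductive invariant for Theorem 2(ii). -/
def PBAInv {K : Type*} [LinearOrder K] (m : ℕ) (st : PBAState K) : Prop :=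
  0 ≤ st.zstar ∧ st.sample.card ≤ m ∧ (st.zstar ≠ 0 → st.sample.card = m) ∧
  ∀ i ∈ st.sample, st.q i = st.qstar i ∧ 0 < st.W i ∧ 0 < st.uu i ∧ st.uu i ≤ 1 ∧
    0 < st.q i ∧ st.q i ≤ 1 ∧ st.q i * st.zstar ≤ st.W i ∧ st.uu i * st.zstar ≤ st.W i

lemma pbaStep_inv {K : Type*} [LinearOrder K] {m : ℕ} {k : K} {x ut : ℝ}
    {st : PBAState K} (hx : 0 < x) (hut : 0 < ut) (hut1 : ut ≤ 1)
    (h : PBAInv m st) : PBAInv m (pbaStep m k x ut st) := by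
  obtain ⟨hz0, hcard, hfull, hkeys⟩ := h
  unfold pbaStep
  by_cases hks : k ∈ st.sample
  · simp only [if_pos hks]
    refine ⟨hz0, hcard, hfull, ?_⟩
    intro i hi
    obtain ⟨h1, h2, h3, h4, h5, h6, h7, h8⟩ := hkeys i hi
    by_cases hik : i = k
    · subst hik
      simp only [Function.update_self]
      exact ⟨h1, by linarith, h3, h4, h5, h6, by linarith, by linarith⟩
    · simp only [Function.update_of_ne hik]
      exact ⟨h1, h2, h3, h4, h5, h6, h7, h8⟩
  · simp only [if_neg hks]
    set S : Finset K := insert k st.sample with hS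
    have hSne : S.Nonempty := Finset.insert_nonempty k st.sample
    set W' := Function.update st.W k x with hW'
    set uu' := Function.update st.uu k ut with huu'
    have hW'k : W' k = x := Function.update_self k x st.W
    have huu'k : uu' k = ut := Function.update_self k ut st.uu
    have hW'o : ∀ j ∈ st.sample, W' j = st.W j := by
      intro j hj
      have : j ≠ k := by rintro rfl; exact hks hj
      exact Function.update_of_ne this x st.W
    have huu'o : ∀ j ∈ st.sample, uu' j = st.uu j := by
      intro j hj
      have : j ≠ k := by rintro rfl; exact hks hj
      exact Function.update_of_ne this ut st.uu
    by_cases hcm : S.card ≤ m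
    · rw [if_pos hcm]
      -- admission without discard; here zstar must be 0
      have hzstar0 : st.zstar = 0 := by
        by_contra hne
        have := hfull hne
        have : S.card = st.sample.card + 1 := Finset.card_insert_of_notMem hks
        omega
      refine ⟨hz0, hcm, ?_, ?_⟩
      · intro hne; exact absurd hzstar0 hne
      · intro i hi
        by_cases hik : i = k
        · subst hik
          simp only [hW'k, huu'k, Function.update_self, hzstar0]
          refine ⟨by trivial, hx, hut, hut1, one_pos, le_refl 1, ?_, ?_⟩ <;> nlinarith
        · have hi' : i ∈ st.sample := Finset.mem_of_mem_insert_of_ne hi hik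
          obtain ⟨h1, h2, h3, h4, h5, h6, h7, h8⟩ := hkeys i hi'
          simp only [Function.update_of_ne hik, hW'o i hi', huu'o i hi']
          exact ⟨h1, h2, h3, h4, h5, h6, h7, h8⟩
    · rw [if_neg hcm]
      -- the discard step
      set prio : K → ℝ := fun k' => W' k' / uu' k' with hprio
      set zt : ℝ := S.inf' hSne prio with hzt
      set kstar : K := argminKey S prio hSne with hkstar
      set zs : ℝ := max st.zstar zt with hzs
      have hSk : k ∈ S := Finset.mem_insert_self k st.sample
      have hW'pos : ∀ j ∈ S, 0 < W' j := by
        intro j hj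
        rcases Finset.mem_insert.mp hj with hjk | hjo
        · subst hjk; rw [hW'k]; exact hx
        · rw [hW'o j hjo]; exact (hkeys j hjo).2.1
      have huu'pos : ∀ j ∈ S, 0 < uu' j := by
        intro j hj
        rcases Finset.mem_insert.mp hj with hjk | hjo
        · subst hjk; rw [huu'k]; exact hut
        · rw [huu'o j hjo]; exact (hkeys j hjo).2.2.1
      have hzt_pos : 0 < zt := by
        obtain ⟨j0, hj0, hval⟩ := Finset.exists_mem_eq_inf' hSne prio
        rw [hzt, hval]
        exact div_pos (hW'pos j0 hj0) (huu'pos j0 hj0)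
      have hzt_le : ∀ j ∈ S, uu' j * zt ≤ W' j := by
        intro j hj
        have h1 : zt ≤ prio j := Finset.inf'_le prio hj
        have h2 : zt * uu' j ≤ W' j :=
          (le_div_iff₀ (huu'pos j hj)).mp h1
        linarith [h2]
      have hScard : S.card = m + 1 := by
        have : S.card = st.sample.card + 1 := Finset.card_insert_of_notMem hks
        omega
      have hkstarS : kstar ∈ S := (argminKey_spec S prio hSne).1
      have hsurv_card : (S.erase kstar).card = m := by
        rw [Finset.card_erase_of_mem hkstarS, hScard]
        omega
      rcases le_or_gt st.zstar zt with hle | hlt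
      · -- Case A : zt ≥ zstar, so zs = zt
        have hzs_eq : zs = zt := max_eq_right hle
        refine ⟨by rw [hzs_eq]; linarith, le_of_eq hsurv_card, fun _ => hsurv_card, ?_⟩
        intro i hi
        have hiS : i ∈ S := Finset.mem_of_mem_erase hi
        simp only [if_pos hi]
        have hWpos := hW'pos i hiS
        have hupos := huu'pos i hiS
        have hq'pos : 0 < Function.update st.q k 1 i ∧ Function.update st.q k 1 i ≤ 1 := by
          by_cases hik : i = k
          · subst hik; simp [Function.update_self]
          · have hi' : i ∈ st.sample := Finset.mem_of_mem_insert_of_ne hiS hik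
            obtain ⟨_, _, _, _, h5, h6, _, _⟩ := hkeys i hi'
            simp only [Function.update_of_ne hik]; exact ⟨h5, h6⟩
        constructor
        · -- qnew = qstarnew
          by_cases hik : i = k
          · subst hik
            simp only [Function.update_self, if_pos rfl, hzs_eq, if_true, eq_self_iff_true]
          · have hi' : i ∈ st.sample := Finset.mem_of_mem_insert_of_ne hiS hik
            obtain ⟨h1, _, _, _, _, _, _, _⟩ := hkeys i hi'
            simp only [Function.update_of_ne hik, if_neg hik, hzs_eq, h1]
        · have hqmin_pos : 0 < min (Function.update st.q k 1 i) (W' i / zt) :=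
            lt_min hq'pos.1 (div_pos hWpos hzt_pos)
          have hqmin_le : min (Function.update st.q k 1 i) (W' i / zt) ≤ 1 :=
            le_trans (min_le_left _ _) hq'pos.2
          have hqmul : min (Function.update st.q k 1 i) (W' i / zt) * zs ≤ W' i := by
            rw [hzs_eq]
            calc min (Function.update st.q k 1 i) (W' i / zt) * zt
                ≤ (W' i / zt) * zt := by
                  exact mul_le_mul_of_nonneg_right (min_le_right _ _) (le_of_lt hzt_pos)
              _ = W' i := div_mul_cancel₀ _ (ne_of_gt hzt_pos)
          have humul : uu' i * zs ≤ W' i := by rw [hzs_eq]; exact hzt_le i hiS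
          exact ⟨hWpos, hupos, by
            rcases Finset.mem_insert.mp hiS with hik | hio
            · subst hik; rw [huu'k]; exact hut1
            · rw [huu'o i hio]; exact (hkeys i hio).2.2.2.1,
            hqmin_pos, hqmin_le, hqmul, humul⟩
      · -- Case B : zt < zstar ; then the new key is discarded and zs = zstar
        have hzstar_pos : 0 < st.zstar := lt_trans hzt_pos hlt
        have hold_prio : ∀ j ∈ st.sample, st.zstar ≤ prio j := by
          intro j hj
          obtain ⟨_, h2, h3, _, _, _, _, h8⟩ := hkeys j hj
          have : st.zstar * st.uu j ≤ st.W j := by linarith [h8]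
          rw [hprio]
          simp only
          rw [hW'o j hj, huu'o j hj]
          exact (le_div_iff₀ h3).mpr this
        have hpk : prio k = zt := by
          obtain ⟨j0, hj0, hval⟩ := Finset.exists_mem_eq_inf' hSne prio
          rcases Finset.mem_insert.mp hj0 with hjk | hjo
          · rw [← hjk, hzt, hval]
          · exfalso
            have := hold_prio j0 hjo
            rw [hzt] at hlt
            rw [← hval] at this
            linarith
        have hkstar_eq : kstar = k := by
          apply argminKey_eq_of_unique
          · exact hSk
          · intro j hj hjk
            have hjo : j ∈ st.sample := Finset.mem_of_mem_insert_of_ne hj hjk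
            rw [hpk]
            exact lt_of_lt_of_le hlt (hold_prio j hjo)
        have hsurv : S.erase kstar = st.sample := by
          rw [hkstar_eq, hS, Finset.erase_insert hks]
        have hzs_eq : zs = st.zstar := max_eq_left (le_of_lt hlt)
        refine ⟨by rw [hzs_eq]; exact hz0, ?_, ?_, ?_⟩
        · rw [hsurv]; exact hcard
        · intro _; rw [hsurv]; exact hfull (ne_of_gt hzstar_pos)
        · intro i hi
          rw [hsurv] at hi
          have hik : i ≠ k := fun e => hks (e ▸ hi)
          obtain ⟨h1, h2, h3, h4, h5, h6, h7, h8⟩ := hkeys i hi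
          have hWeq : W' i = st.W i := hW'o i hi
          have hueq : uu' i = st.uu i := huu'o i hi
          have hq_le_zstar : st.q i ≤ st.W i / st.zstar := (le_div_iff₀ hzstar_pos).mpr h7
          have hq_le_zt : st.q i ≤ st.W i / zt := by
            have : st.q i * zt ≤ st.q i * st.zstar :=
              mul_le_mul_of_nonneg_left (le_of_lt hlt) (le_of_lt h5)
            exact (le_div_iff₀ hzt_pos).mpr (by linarith)
          have hqnew : min (Function.update st.q k 1 i) (W' i / zt) = st.q i := by
            rw [Function.update_of_ne hik, hWeq]
            exact min_eq_left hq_le_zt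
          have hqstarnew : min (Function.update st.qstar k 1 i) (W' i / zs) = st.qstar i := by
            rw [Function.update_of_ne hik, hWeq, hzs_eq, ← h1]
            exact min_eq_left hq_le_zstar
          rw [hsurv]
          simp only [if_pos hi, if_neg hik]
          rw [hqnew, hqstarnew, hzs_eq, hWeq, hueq]
          exact ⟨h1, h2, h3, h4, h5, h6, h7, h8⟩

lemma pbaTraj_inv {K : Type*} [LinearOrder K] (m : ℕ) (keys : ℕ → K) (xs : ℕ → ℝ)
    (hxs : ∀ t, 0 < xs t) (u : ℕ → ℝ) (hu : ∀ t, u t ∈ Set.Ioc (0 : ℝ) 1) (t : ℕ) :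
    PBAInv m (pbaTraj m keys xs u t) := by
  induction t with
  | zero =>
    refine ⟨le_refl 0, Nat.zero_le m, fun h => absurd rfl h, ?_⟩
    intro i hi
    exact absurd hi (Finset.notMem_empty i)
  | succ t ih =>
    exact pbaStep_inv (hxs (t + 1)) (hu (t + 1)).1 (hu (t + 1)).2 ih

/-- **Theorem 2(ii) (Correctness of deferred update).** Pathwise, for any
uniform variates `u t ∈ (0,1]`: the exact retention probabilities
`q_{i,t} = min{1, min_{s ∈ [τ_{i,t},t] ∩ T⁰} W_{i,s}/z_s}` (maintained in the
field `q` of the state, updated against each per-time threshold `z_s`)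
coincide with the probabilities `q*_{i,t}` (field `qstar`, defined recursively
by `q*_{i,t} = min{q*_{i,τ_t}, W_{i,t}/z*_t}`, and `q*_{i,t} = min{1, W_{i,t}/z*_t}`
when `i = k_t`, against the running maximum threshold `z*_t`),
for every time `t` and every key `i` in the current sample `K̂_t`. -/
theorem pba_deferred_update
    {K : Type*} [LinearOrder K]
    (m : ℕ) (hm : 1 ≤ m)
    (keys : ℕ → K) (xs : ℕ → ℝ) (hxs : ∀ t, 0 < xs t)
    (u : ℕ → ℝ) (hu : ∀ t, u t ∈ Set.Ioc (0 : ℝ) 1)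
    (t : ℕ) (i : K) (hi : i ∈ (pbaTraj m keys xs u t).sample) :
    (pbaTraj m keys xs u t).q i = (pbaTraj m keys xs u t).qstar i :=
  ((pbaTraj_inv m keys xs hxs u hu t).2.2.2 i hi).1
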